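/- arXiv:2307.13389 — 2 statements merged into one kernel-verified Lean document; each statement's English description precedes it below -/
import Mathlib

section
/- For all X, Y, Z ∈ V one has g(G(X,Y),JZ) + g(G(X,Z),JY) = 0. -/
open Matrix

/-- The indefinite inner product `⟨a,b⟩ = -(1/2)·Trace(adj(a)·b)` on 2×2 real matrices. -/
noncomputable def ip (a b : Matrix (Fin 2) (Fin 2) ℝ) : ℝ :=
  -(1/2 : ℝ) * (a.adjugate * b).trace

/-- The product metric `⟨(α,β),(γ,δ)⟩_E = ⟨α,γ⟩ + ⟨β,δ⟩`. -/
noncomputable def ipE (X Y : Matrix (Fin 2) (Fin 2) ℝ × Matrix (Fin 2) (Fin 2) ℝ) : ℝ :=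
  ip X.1 Y.1 + ip X.2 Y.2

/-- The nearly Kähler metric `g`. -/
noncomputable def g (X Y : Matrix (Fin 2) (Fin 2) ℝ × Matrix (Fin 2) (Fin 2) ℝ) : ℝ :=
  (2/3 : ℝ) * ipE X Y - (1/3 : ℝ) * ipE (X.2, X.1) Y

/-- The almost complex structure `J(α,β) = (1/√3)·(α − 2β, 2α − β)`. -/
noncomputable def Jmap (X : Matrix (Fin 2) (Fin 2) ℝ × Matrix (Fin 2) (Fin 2) ℝ) :
    Matrix (Fin 2) (Fin 2) ℝ × Matrix (Fin 2) (Fin 2) ℝ :=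
  (Real.sqrt 3)⁻¹ • (X.1 - (2:ℝ) • X.2, (2:ℝ) • X.1 - X.2)

/-- The almost product structure `P(α,β) = (β,α)`. -/
def Pmap (X : Matrix (Fin 2) (Fin 2) ℝ × Matrix (Fin 2) (Fin 2) ℝ) :
    Matrix (Fin 2) (Fin 2) ℝ × Matrix (Fin 2) (Fin 2) ℝ :=
  (X.2, X.1)

/-- The cross product `α×β = (1/2)(αβ − βα)` on `sl(2,ℝ)`. -/
noncomputable def cross (a b : Matrix (Fin 2) (Fin 2) ℝ) : Matrix (Fin 2) (Fin 2) ℝ :=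
  (1/2 : ℝ) • (a * b - b * a)

/-- The tensor `G`. -/
noncomputable def Gmap (X Y : Matrix (Fin 2) (Fin 2) ℝ × Matrix (Fin 2) (Fin 2) ℝ) :
    Matrix (Fin 2) (Fin 2) ℝ × Matrix (Fin 2) (Fin 2) ℝ :=
  (2 / (3 * Real.sqrt 3)) •
    (-(cross X.1 Y.1) - cross X.1 Y.2 + cross Y.1 X.2 + (2:ℝ) • cross X.2 Y.2,
     -((2:ℝ) • cross X.1 Y.1) + cross X.1 Y.2 - cross Y.1 X.2 + cross X.2 Y.2)

/-! The form `(α, β, γ) ↦ ⟨α × β, γ⟩ = ¼ tr((αβ − βα)γ)` is alternating by cyclicity of the trace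
(`α × β` is traceless, so `adj(α × β) = −α × β`). Since `g(U, JZ) = (⟨U₂, Z₁⟩ − ⟨U₁, Z₂⟩)/√3`,
`g(G(X,Y), JZ)` is a combination of values of this form on one component each of `X`, `Y`, `Z`, with
coefficients symmetric under exchanging the components of `Y` and `Z`; alternation in the last two
slots makes the sum vanish. -/

theorem Matrix.adjugate_fin_two_eq_trace_smul_one_sub {R : Type*} [CommRing R]
    (A : Matrix (Fin 2) (Fin 2) R) : A.adjugate = A.trace • 1 - A := by
  ext i j
  fin_cases i <;> fin_cases j <;> simp [adjugate_fin_two, trace_fin_two]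

theorem ip_eq_trace (a b : Matrix (Fin 2) (Fin 2) ℝ) :
    ip a b = ((a * b).trace - a.trace * b.trace) / 2 := by
  rw [ip, adjugate_fin_two_eq_trace_smul_one_sub, Matrix.sub_mul, trace_sub, smul_mul, trace_smul,
    Matrix.one_mul, smul_eq_mul]
  ring

theorem cross_swap (a b : Matrix (Fin 2) (Fin 2) ℝ) : cross b a = -cross a b := by
  rw [cross, cross, ← smul_neg, neg_sub]

theorem trace_cross (a b : Matrix (Fin 2) (Fin 2) ℝ) : (cross a b).trace = 0 := by
  rw [cross, trace_smul, trace_sub, trace_mul_comm, sub_self, smul_zero]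

theorem ip_cross_eq_trace (a b c : Matrix (Fin 2) (Fin 2) ℝ) :
    ip (cross a b) c = ((a * b * c).trace - (b * a * c).trace) / 4 := by
  rw [ip_eq_trace, trace_cross, zero_mul, sub_zero, cross, smul_mul, Matrix.sub_mul, trace_smul,
    trace_sub, smul_eq_mul]
  ring

theorem ip_cross_swap_right (a b c : Matrix (Fin 2) (Fin 2) ℝ) :
    ip (cross a c) b = -ip (cross a b) c := by
  rw [ip_cross_eq_trace, ip_cross_eq_trace, trace_mul_cycle a c b, ← trace_mul_cycle a b c]
  ring

theorem g_Jmap (U Z : Matrix (Fin 2) (Fin 2) ℝ × Matrix (Fin 2) (Fin 2) ℝ) :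
    g U (Jmap Z) = (ip U.2 Z.1 - ip U.1 Z.2) / Real.sqrt 3 := by
  simp only [g, ipE, Jmap, ip_eq_trace, Prod.smul_fst, Prod.smul_snd, Matrix.mul_sub,
    Matrix.mul_smul, trace_sub, trace_smul, smul_eq_mul]
  ring

theorem g_Gmap_Jmap (X Y Z : Matrix (Fin 2) (Fin 2) ℝ × Matrix (Fin 2) (Fin 2) ℝ) :
    g (Gmap X Y) (Jmap Z) = 2 / 9 *
      (-2 * ip (cross X.1 Y.1) Z.1 + ip (cross X.1 Y.2) Z.1 + ip (cross X.2 Y.1) Z.1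
        + ip (cross X.2 Y.2) Z.1 + ip (cross X.1 Y.1) Z.2 + ip (cross X.1 Y.2) Z.2
        + ip (cross X.2 Y.1) Z.2 - 2 * ip (cross X.2 Y.2) Z.2) := by
  have h3 : Real.sqrt 3 ^ 2 = 3 := Real.sq_sqrt (by norm_num)
  simp only [g_Jmap, Gmap, cross_swap X.2 Y.1, ip_eq_trace, Prod.smul_fst, Prod.smul_snd,
    Matrix.add_mul, Matrix.sub_mul, Matrix.neg_mul, smul_mul, trace_add, trace_sub, trace_neg,
    trace_smul, trace_cross, smul_eq_mul]
  field_simp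
  rw [h3]
  ring

theorem stmt_10_general (X Y Z : Matrix (Fin 2) (Fin 2) ℝ × Matrix (Fin 2) (Fin 2) ℝ) :
    g (Gmap X Y) (Jmap Z) + g (Gmap X Z) (Jmap Y) = 0 := by
  rw [g_Gmap_Jmap, g_Gmap_Jmap]
  simp only [ip_cross_swap_right _ Z.1, ip_cross_swap_right _ Z.2]
  ring

/-- `g(G(X,Y),JZ) + g(G(X,Z),JY) = 0` on `V = sl(2,ℝ) × sl(2,ℝ)`. -/
theorem stmt_10 (X Y Z : Matrix (Fin 2) (Fin 2) ℝ × Matrix (Fin 2) (Fin 2) ℝ)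
    (hX1 : X.1.trace = 0) (hX2 : X.2.trace = 0)
    (hY1 : Y.1.trace = 0) (hY2 : Y.2.trace = 0)
    (hZ1 : Z.1.trace = 0) (hZ2 : Z.2.trace = 0) :
    g (Gmap X Y) (Jmap Z) + g (Gmap X Z) (Jmap Y) = 0 :=
  stmt_10_general X Y Z
end

section
/- Let i = [[0,1],[−1,0]] and define φ : sl(2,ℝ) → sl(2,ℝ) by φ(α) = −i·α·i. Then φ∘φ = Id, for all α, γ ∈ sl(2,ℝ) one has g((α,φ(α)), J(γ,φ(γ))) = 0, and furthermore P(i,φ(i)) = (i,φ(i)), P(j,φ(j)) = −(j,φ(j)), P(k,φ(k)) = −(k,φ(k)), where j = [[0,1],[1,0]] and k = [[1,0],[0,−1]]. (This is the algebraic content of the facts that the immersion u ↦ (u, i·u·i) of SL(2,ℝ) into SL(2,ℝ)×SL(2,ℝ) is Lagrangian with constant angle functions (0,π,π).) -/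
/-!
Since `i * i = -1`, the map `φ α = -(i α i)` is an involution. Expanding the definitions gives
`g ((α, β), J (γ, δ)) = (⟨β, γ⟩ - ⟨α, δ⟩) / √3`, so the Lagrangian condition says that `φ` is
self-adjoint for `⟨·,·⟩`. This holds because the adjugate reverses products, so that
`⟨u α v, γ⟩ = ⟨α, adj u · γ · adj v⟩`, and `adj i = -i`. The eigenvalues of `P` follow from
`φ i = i`, `φ j = -j`, `φ k = -k`.
-/

open Matrix

theorem neg_conj_involutive {R : Type*} [Ring R] {u : R} (hu : u * u = -1) :
    Function.Involutive fun a : R => -(u * a * u) := fun a => by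
  calc -(u * -(u * a * u) * u) = u * u * a * (u * u) := by noncomm_ring
    _ = a := by rw [hu]; noncomm_ring

section ip

variable (a b c : Matrix (Fin 2) (Fin 2) ℝ)

theorem ip_add_right : ip a (b + c) = ip a b + ip a c := by
  simp only [ip, Matrix.mul_add, trace_add]; ring

theorem ip_neg_right : ip a (-b) = -ip a b := by
  simp only [ip, Matrix.mul_neg, trace_neg]; ring

theorem ip_sub_right : ip a (b - c) = ip a b - ip a c := by
  rw [sub_eq_add_neg, ip_add_right, ip_neg_right, ← sub_eq_add_neg]

theorem ip_smul_right (r : ℝ) : ip a (r • b) = r * ip a b := by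
  simp only [ip, Matrix.mul_smul, trace_smul, smul_eq_mul]; ring

theorem ip_neg_left : ip (-a) b = -ip a b := by
  have hadj : adjugate (-a) = -adjugate a := by simpa using adjugate_smul (-1 : ℝ) a
  simp only [ip, hadj, Matrix.neg_mul, trace_neg]
  ring

theorem ip_mul_mul_left (u v : Matrix (Fin 2) (Fin 2) ℝ) :
    ip (u * a * v) b = ip a (adjugate u * b * adjugate v) := by
  simp only [ip, adjugate_mul_distrib, Matrix.mul_assoc]
  rw [trace_mul_comm (adjugate v)]
  simp only [Matrix.mul_assoc]

end ip

theorem g_Jmap_s14 (α β γ δ : Matrix (Fin 2) (Fin 2) ℝ) :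
    g (α, β) (Jmap (γ, δ)) = (Real.sqrt 3)⁻¹ * (ip β γ - ip α δ) := by
  simp only [g, ipE, Jmap, Prod.smul_mk, ip_smul_right, ip_sub_right]
  ring

theorem Pmap_antidiag (a : Matrix (Fin 2) (Fin 2) ℝ) : Pmap (a, -a) = -(a, -a) := by
  simp [Pmap]

/-- The immersion `u ↦ (u, i·u·i)` is Lagrangian with constant angle functions `(0,π,π)`. -/
theorem stmt_14 :
    let i : Matrix (Fin 2) (Fin 2) ℝ := !![0, 1; -1, 0]
    let j : Matrix (Fin 2) (Fin 2) ℝ := !![0, 1; 1, 0]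
    let k : Matrix (Fin 2) (Fin 2) ℝ := !![1, 0; 0, -1]
    let φ : Matrix (Fin 2) (Fin 2) ℝ → Matrix (Fin 2) (Fin 2) ℝ := fun α => -(i * α * i)
    (∀ α : Matrix (Fin 2) (Fin 2) ℝ, α.trace = 0 → φ (φ α) = α) ∧
    (∀ α γ : Matrix (Fin 2) (Fin 2) ℝ, α.trace = 0 → γ.trace = 0 →
      g (α, φ α) (Jmap (γ, φ γ)) = 0) ∧
    Pmap (i, φ i) = (i, φ i) ∧
    Pmap (j, φ j) = -(j, φ j) ∧
    Pmap (k, φ k) = -(k, φ k) := by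
  intro i j k φ
  have hii : i * i = -1 := by
    simp only [i]; norm_num [Matrix.mul_fin_two, ← Matrix.ext_iff, Fin.forall_fin_two]
  have hadj : adjugate i = -i := by
    simp only [i, adjugate_fin_two_of]; norm_num [← Matrix.ext_iff, Fin.forall_fin_two]
  have hφ_selfAdjoint (a b) : ip (φ a) b = ip a (φ b) := by
    simp only [φ, ip_neg_left, ip_mul_mul_left, hadj, ip_neg_right, Matrix.neg_mul, Matrix.mul_neg,
      neg_neg]
  have hφi : φ i = i := by
    simp only [φ, hii, Matrix.neg_mul, one_mul, neg_neg]
  have hφj : φ j = -j := by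
    simp only [φ, i, j]; norm_num [Matrix.mul_fin_two, ← Matrix.ext_iff, Fin.forall_fin_two]
  have hφk : φ k = -k := by
    simp only [φ, i, k]; norm_num [Matrix.mul_fin_two, ← Matrix.ext_iff, Fin.forall_fin_two]
  refine ⟨fun α _ => neg_conj_involutive hii α, fun α γ _ _ => ?_, ?_, ?_, ?_⟩
  · rw [g_Jmap_s14, hφ_selfAdjoint, sub_self, mul_zero]
  · rw [hφi]; rfl
  · rw [hφj]; exact Pmap_antidiag j
  · rw [hφk]; exact Pmap_antidiag k
end
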